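/- A uniformly continuous function f on a locally compact Abelian group G is Stepanov p-almost periodic if and only if it is Bohr almost periodic; i.e. S^p(G) ∩ C_u(G) = SAP(G). -/

import Mathlib

open MeasureTheory Filter Topology
open scoped ENNReal Pointwise

noncomputable section

variable {G : Type*} [AddCommGroup G] [UniformSpace G] [IsUniformAddGroup G]
  [LocallyCompactSpace G] [MeasurableSpace G] [BorelSpace G]

/-- Translation operator: `Tt t f = f (· - t)`. -/
def Tt (t : G) (f : G → ℂ) : G → ℂ := fun x => f (x - t)

/-- Stepanov `p`-norm with respect to the set `K`:
`sup_y ( θ_G(K)⁻¹ ∫_{y+K} |f|^p )^(1/p)`. -/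
def SNorm (μ : Measure G) (K : Set G) (p : ℝ) (f : G → ℂ) : ℝ≥0∞ :=
  ⨆ y : G, ((∫⁻ x in y +ᵥ K, (‖f x‖₊ : ℝ≥0∞) ^ p ∂μ) / μ K) ^ (1 / p)

/-- A set `R ⊆ G` is relatively dense if `R + C = G` for some compact `C`. -/
def RelativelyDense (R : Set G) : Prop :=
  ∃ C : Set G, IsCompact C ∧ R + C = Set.univ

/-- `f` is Stepanov `p`-almost periodic (w.r.t. `K`) if for every `ε > 0` the set of
`ε`-almost periods in the Stepanov norm is relatively dense. -/
def StepanovAP (μ : Measure G) (K : Set G) (p : ℝ) (f : G → ℂ) : Prop :=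
  ∀ ε : ℝ, 0 < ε →
    RelativelyDense {t : G | SNorm μ K p (f - Tt t f) < ENNReal.ofReal ε}

/-- `f ∈ L^p_loc(G)`. -/
def MemLpLoc (μ : Measure G) (p : ℝ) (f : G → ℂ) : Prop :=
  AEStronglyMeasurable f μ ∧
    ∀ C : Set G, IsCompact C → (∫⁻ x in C, (‖f x‖₊ : ℝ≥0∞) ^ p ∂μ) < ⊤

/-- A continuous character of `G`. -/
def IsChar (χ : G → ℂ) : Prop :=
  Continuous χ ∧ (∀ x y, χ (x + y) = χ x * χ y) ∧ ∀ x, ‖χ x‖ = 1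

/-- A trigonometric polynomial: a finite linear combination of continuous characters. -/
def IsTrigPoly (P : G → ℂ) : Prop :=
  ∃ (n : ℕ) (c : Fin n → ℂ) (χ : Fin n → G → ℂ),
    (∀ i, IsChar (χ i)) ∧ P = fun x => ∑ i, c i * χ i x

/-- A van Hove sequence: precompact open sets whose `K`-boundaries are
asymptotically negligible. -/
def IsVanHove (μ : Measure G) (A : ℕ → Set G) : Prop :=
  (∀ n, IsOpen (A n) ∧ IsCompact (closure (A n))) ∧
    ∀ K : Set G, IsCompact K →
      Tendsto (fun n =>
        μ ((closure (A n + K) \ A n) ∪ (((A n)ᶜ - K) ∩ closure (A n))) / μ (A n))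
        atTop (nhds 0)

/-- The Weyl `p`-seminorm along the sequence `A`. -/
def WSemi (μ : Measure G) (A : ℕ → Set G) (p : ℝ) (f : G → ℂ) : ℝ≥0∞ :=
  Filter.limsup (fun n => SNorm μ (A n) p f) atTop

/-- `f` is Weyl `p`-almost periodic w.r.t. `A`: approximable by trigonometric
polynomials in the Weyl seminorm. -/
def WeylAP (μ : Measure G) (A : ℕ → Set G) (p : ℝ) (f : G → ℂ) : Prop :=
  ∀ ε : ℝ, 0 < ε → ∃ P : G → ℂ, IsTrigPoly P ∧ WSemi μ A p (f - P) < ENNReal.ofReal ε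


/-! The Stepanov norm is dominated by the sup norm, so Bohr almost periods are Stepanov almost
periods. Conversely, uniform continuity gives a neighbourhood `W` of `0` on which every
`f - Tt t f` oscillates by less than `ε / 2`, uniformly in `t`. If `‖f x - f (x - t)‖ > ε`, then
`‖f - Tt t f‖ ≥ ε / 2` on `x + W`, which sits inside a translate of `K`; hence the Stepanov norm
is at least `δ = (ε / 2) (μ W / μ K) ^ (1 / p) > 0`, and Stepanov `δ`-almost periods are Bohr
`ε`-almost periods. -/

omit [IsUniformAddGroup G] [LocallyCompactSpace G] [MeasurableSpace G] [BorelSpace G] in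
theorem RelativelyDense.mono {R S : Set G} (hRS : R ⊆ S) (hR : RelativelyDense R) :
    RelativelyDense S := by
  obtain ⟨C, hC, hRC⟩ := hR
  exact ⟨C, hC, Set.eq_univ_of_univ_subset (hRC ▸ Set.add_subset_add_right hRS)⟩

section StepanovNormBounds

omit [UniformSpace G] [IsUniformAddGroup G] [LocallyCompactSpace G] [BorelSpace G]

variable (μ : Measure G) [μ.IsAddLeftInvariant] {p : ℝ} (hp : 0 < p)
  (K : Set G) {g : G → ℂ} {c : ℝ}
include hp

theorem sNorm_le_ofReal_of_forall_norm_le (hg : ∀ x, ‖g x‖ ≤ c) :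
    SNorm μ K p g ≤ ENNReal.ofReal c := by
  refine iSup_le fun y => ?_
  have hint : ∫⁻ x in y +ᵥ K, (‖g x‖₊ : ℝ≥0∞) ^ p ∂μ ≤ ENNReal.ofReal c ^ p * μ K :=
    calc ∫⁻ x in y +ᵥ K, (‖g x‖₊ : ℝ≥0∞) ^ p ∂μ
        ≤ ∫⁻ _ in y +ᵥ K, ENNReal.ofReal c ^ p ∂μ := by
          refine lintegral_mono fun x => ENNReal.rpow_le_rpow ?_ hp.le
          rw [← enorm_eq_nnnorm, ← ofReal_norm]
          exact ENNReal.ofReal_le_ofReal (hg x)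
      _ = ENNReal.ofReal c ^ p * μ K := by rw [setLIntegral_const, measure_vadd]
  calc ((∫⁻ x in y +ᵥ K, (‖g x‖₊ : ℝ≥0∞) ^ p ∂μ) / μ K) ^ (1 / p)
      ≤ (ENNReal.ofReal c ^ p) ^ (1 / p) :=
        ENNReal.rpow_le_rpow (ENNReal.div_le_of_le_mul hint) (by positivity)
    _ = ENNReal.ofReal c := by
        rw [← ENNReal.rpow_mul, mul_one_div_cancel hp.ne', ENNReal.rpow_one]

theorem ofReal_mul_rpow_le_sNorm [MeasurableAdd G] {W : Set G} (hW : MeasurableSet W) {u : G}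
    (hWK : u +ᵥ W ⊆ K) (x : G) (hg : ∀ w ∈ W, c ≤ ‖g (x + w)‖) :
    ENNReal.ofReal c * (μ W / μ K) ^ (1 / p) ≤ SNorm μ K p g := by
  have hint :
      ENNReal.ofReal c ^ p * μ W ≤ ∫⁻ y in (x - u) +ᵥ K, (‖g y‖₊ : ℝ≥0∞) ^ p ∂μ :=
    calc ENNReal.ofReal c ^ p * μ W
        = ∫⁻ _ in x +ᵥ W, ENNReal.ofReal c ^ p ∂μ := by
          rw [setLIntegral_const, measure_vadd]
      _ ≤ ∫⁻ y in x +ᵥ W, (‖g y‖₊ : ℝ≥0∞) ^ p ∂μ := by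
          refine setLIntegral_mono' (hW.const_vadd x) ?_
          rintro _ ⟨w, hw, rfl⟩
          refine ENNReal.rpow_le_rpow ?_ hp.le
          rw [← enorm_eq_nnnorm, ← ofReal_norm]
          exact ENNReal.ofReal_le_ofReal (hg w hw)
      _ ≤ _ := lintegral_mono_set <| by
          simpa [vadd_vadd] using Set.vadd_set_mono (a := x - u) hWK
  calc ENNReal.ofReal c * (μ W / μ K) ^ (1 / p)
      = ((ENNReal.ofReal c ^ p * μ W) / μ K) ^ (1 / p) := by
        rw [mul_div_assoc, ENNReal.mul_rpow_of_nonneg _ _ (by positivity),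
          ← ENNReal.rpow_mul, mul_one_div_cancel hp.ne', ENNReal.rpow_one]
    _ ≤ _ := ENNReal.rpow_le_rpow (ENNReal.div_le_div_right hint _) (by positivity)
    _ ≤ SNorm μ K p g :=
        le_iSup (fun y => ((∫⁻ x in y +ᵥ K, (‖g x‖₊ : ℝ≥0∞) ^ p ∂μ) / μ K) ^ (1 / p)) (x - u)

end StepanovNormBounds

omit [LocallyCompactSpace G] [MeasurableSpace G] [BorelSpace G] in
theorem UniformContinuous.exists_nhds_zero_dist_lt {E : Type*} [PseudoMetricSpace E] {f : G → E}
    (hf : UniformContinuous f) {ε : ℝ} (hε : 0 < ε) :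
    ∃ T ∈ 𝓝 (0 : G), ∀ a b, b - a ∈ T → dist (f a) (f b) < ε := by
  have hmem := hf (Metric.dist_mem_uniformity hε)
  rw [Filter.mem_map, uniformity_eq_comap_nhds_zero G, Filter.mem_comap] at hmem
  obtain ⟨T, hT, hTsub⟩ := hmem
  exact ⟨T, hT, fun a b hab => hTsub (show (a, b) ∈ _ from hab)⟩

omit [UniformSpace G] [IsUniformAddGroup G] [LocallyCompactSpace G] [MeasurableSpace G]
  [BorelSpace G] in
theorem norm_sub_sub_lt_of_forall_dist_lt {E : Type*} [SeminormedAddCommGroup E] {f : G → E}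
    {T : Set G} {η : ℝ} (hfT : ∀ a b, b - a ∈ T → dist (f a) (f b) < η) {w : G} (hw : w ∈ T)
    (t x : G) : ‖f x - f (x - t)‖ < ‖f (x + w) - f (x + w - t)‖ + 2 * η := by
  have h₁ : ‖f x - f (x + w)‖ < η := by
    simpa [dist_eq_norm] using hfT x (x + w) (by simpa using hw)
  have h₂ : ‖f (x - t) - f (x + w - t)‖ < η := by
    simpa [dist_eq_norm] using hfT (x - t) (x + w - t) (by simpa using hw)
  calc ‖f x - f (x - t)‖
      = ‖(f (x + w) - f (x + w - t)) + (f x - f (x + w)) - (f (x - t) - f (x + w - t))‖ := by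
        congr 1; abel
    _ ≤ ‖f (x + w) - f (x + w - t)‖ + ‖f x - f (x + w)‖ + ‖f (x - t) - f (x + w - t)‖ :=
        (norm_sub_le _ _).trans (by gcongr; exact norm_add_le _ _)
    _ < ‖f (x + w) - f (x + w - t)‖ + 2 * η := by linarith

omit [LocallyCompactSpace G] in
theorem exists_pos_forall_norm_le_of_sNorm_lt (μ : Measure G) [μ.IsAddHaarMeasure] {p : ℝ}
    (hp : 0 < p) {K : Set G} (hK : IsCompact K) (hK' : (interior K).Nonempty) {f : G → ℂ}
    (hf : UniformContinuous f) {ε : ℝ} (hε : 0 < ε) :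
    ∃ δ > 0, ∀ t, SNorm μ K p (f - Tt t f) < ENNReal.ofReal δ →
      ∀ x, ‖f x - f (x - t)‖ ≤ ε := by
  obtain ⟨T, hT, hfT⟩ := hf.exists_nhds_zero_dist_lt (ε := ε / 4) (by positivity)
  obtain ⟨u, hu⟩ := hK'
  set W := interior (T ∩ (u + ·) ⁻¹' K)
  have hW0 : (0 : G) ∈ W := mem_interior_iff_mem_nhds.2 <| Filter.inter_mem hT <|
    (continuous_const_add u).continuousAt.preimage_mem_nhds
      (by simpa using mem_interior_iff_mem_nhds.1 hu)
  have hWK : u +ᵥ W ⊆ K := by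
    rintro _ ⟨w, hw, rfl⟩
    exact (interior_subset hw).2
  have hμW : 0 < μ W := isOpen_interior.measure_pos μ ⟨0, hW0⟩
  have hμWK : μ W ≤ μ K := by
    rw [← measure_vadd μ u W]
    exact measure_mono hWK
  have hratio : μ W / μ K ≠ ⊤ :=
    (ENNReal.div_lt_top (hμWK.trans_lt hK.measure_lt_top).ne (hμW.trans_le hμWK).ne').ne
  set δ := ENNReal.ofReal (ε / 2) * (μ W / μ K) ^ (1 / p)
  have hδ0 : δ ≠ 0 := mul_ne_zero (ENNReal.ofReal_pos.2 (by positivity)).ne'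
    (ENNReal.rpow_pos (ENNReal.div_pos hμW.ne' hK.measure_lt_top.ne) hratio).ne'
  have hδtop : δ ≠ ⊤ := ENNReal.mul_ne_top ENNReal.ofReal_ne_top
    (ENNReal.rpow_ne_top_of_nonneg (by positivity) hratio)
  refine ⟨δ.toReal, ENNReal.toReal_pos hδ0 hδtop, fun t ht x => ?_⟩
  rw [ENNReal.ofReal_toReal hδtop] at ht
  by_contra! hx
  refine ht.not_ge (ofReal_mul_rpow_le_sNorm μ hp K isOpen_interior.measurableSet hWK x ?_)
  intro w hw
  have hosc := norm_sub_sub_lt_of_forall_dist_lt hfT (interior_subset hw).1 t x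
  simp only [Pi.sub_apply, Tt]
  linarith

theorem stepanovAP_inter_cu_eq_sap_general (μ : Measure G) [μ.IsAddHaarMeasure]
    (p : ℝ) (hp : 1 ≤ p) (K : Set G) (hK : IsCompact K) (hK' : (interior K).Nonempty)
    (f : G → ℂ) (hf : UniformContinuous f) :
    StepanovAP μ K p f ↔
      ∀ ε : ℝ, 0 < ε →
        RelativelyDense {t : G | ∀ x : G, ‖f x - f (x - t)‖ ≤ ε} := by
  have hp₀ : 0 < p := one_pos.trans_le hp
  refine ⟨fun hS ε hε => ?_, fun hB ε hε => ?_⟩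
  · obtain ⟨δ, hδ, hδε⟩ := exists_pos_forall_norm_le_of_sNorm_lt μ hp₀ hK hK' hf hε
    exact (hS δ hδ).mono hδε
  · refine (hB (ε / 2) (half_pos hε)).mono fun t ht => ?_
    calc SNorm μ K p (f - Tt t f) ≤ ENNReal.ofReal (ε / 2) :=
          sNorm_le_ofReal_of_forall_norm_le μ hp₀ K ht
      _ < ENNReal.ofReal ε := (ENNReal.ofReal_lt_ofReal_iff hε).2 (half_lt_self hε)

theorem stepanovAP_inter_cu_eq_sap (μ : Measure G) [μ.IsAddHaarMeasure]
    (p : ℝ) (hp : 1 ≤ p) (K : Set G) (hK : IsCompact K) (hK' : (interior K).Nonempty)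
    (f : G → ℂ) (hf : UniformContinuous f) (C : ℝ) (hbd : ∀ x : G, ‖f x‖ ≤ C) :
    StepanovAP μ K p f ↔
      ∀ ε : ℝ, 0 < ε →
        RelativelyDense {t : G | ∀ x : G, ‖f x - f (x - t)‖ ≤ ε} :=
  stepanovAP_inter_cu_eq_sap_general μ p hp K hK hK' f hf
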